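/- Let E ⊆ V, let α and β be two distinct elements of E, and set E⁻ = E ∖ {α, β}. Then for every cell i ∈ I the interaction parameter θ_E(i_E) equals the alternating sum of log cross-product ratios: θ_E(i_E) = Σ_{F⊆E⁻} (−1)^{|E⁻∖F|} log [ p(i(F∪{α,β})) · p(i(F)) / ( p(i(F∪{α})) · p(i(F∪{β})) ) ], where for A ⊆ V, i(A) denotes the cell equal to i on A and baseline on V∖A. -/
import Mathlib


open Finset

/-- The cell `i(A)` equal to `i` on `A` and to the baseline `b` off `A`. -/
def cellOn {V : Type} [DecidableEq V] {I : V → Type} (b : ∀ γ, I γ)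
    (A : Finset V) (i : ∀ γ, I γ) : ∀ γ, I γ :=
  fun γ => if γ ∈ A then i γ else b γ

/-- The log-linear interaction parameter `θ_E(i_E)` under baseline constraints. -/
noncomputable def theta {V : Type} [DecidableEq V] {I : V → Type} (b : ∀ γ, I γ)
    (p : (∀ γ, I γ) → ℝ) (E : Finset V) (i : ∀ γ, I γ) : ℝ :=
  ∑ F ∈ E.powerset, (-1 : ℝ) ^ (E \ F).card * Real.log (p (cellOn b F i))

/-- For distinct `u, v ∈ E` and `E⁻ = E ∖ {u, v}`, the interaction parameter `θ_E(i_E)`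
equals the alternating sum over `F ⊆ E⁻` of the log cross-product ratios
`log [p(i(F∪{u,v})) p(i(F)) / (p(i(F∪{u})) p(i(F∪{v})))]`. -/
theorem theta_eq_alternating_log_odds {V : Type} [Fintype V] [DecidableEq V]
    {I : V → Type} [∀ γ, Fintype (I γ)] [∀ γ, DecidableEq (I γ)]
    (b : ∀ γ, I γ) (p : (∀ γ, I γ) → ℝ) (hp : ∀ i, 0 < p i)
    (E : Finset V) (u v : V) (hu : u ∈ E) (hv : v ∈ E) (huv : u ≠ v)
    (i : ∀ γ, I γ) :
    theta b p E i =
      ∑ F ∈ (E \ {u, v}).powerset,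
        (-1 : ℝ) ^ ((E \ {u, v}) \ F).card *
          Real.log ((p (cellOn b (insert u (insert v F)) i) * p (cellOn b F i)) /
            (p (cellOn b (insert u F) i) * p (cellOn b (insert v F) i))) := by
  classical
  set s := E \ {u, v} with hs
  have hus : u ∉ s := by simp [hs]
  have hvs : v ∉ s := by simp [hs]
  have huvs : u ∉ insert v s := by simp [hus, huv]
  have hE : E = insert u (insert v s) := by
    ext x
    simp only [hs, Finset.mem_insert, Finset.mem_sdiff, Finset.mem_singleton]
    constructor
    · intro hx
      by_cases h1 : x = u
      · tauto
      by_cases h2 : x = v <;> tauto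
    · rintro (rfl | rfl | ⟨hx, _⟩) <;> [exact hu; exact hv; exact hx]
  have hEcard : E.card = s.card + 2 := by
    rw [hE, Finset.card_insert_of_notMem huvs, Finset.card_insert_of_notMem hvs]
  simp only [theta]
  rw [show E.powerset = (insert u (insert v s)).powerset from by rw [← hE]]
  rw [Finset.sum_powerset_insert huvs, Finset.sum_powerset_insert hvs,
    Finset.sum_powerset_insert hvs, ← Finset.sum_add_distrib, ← Finset.sum_add_distrib,
    ← Finset.sum_add_distrib]
  refine Finset.sum_congr rfl fun F hF => ?_
  have hFs : F ⊆ s := Finset.mem_powerset.1 hF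
  have hFE : F ⊆ E := hFs.trans (hs ▸ Finset.sdiff_subset)
  have huF : u ∉ F := fun h => hus (hFs h)
  have hvF : v ∉ F := fun h => hvs (hFs h)
  have huvF : u ∉ insert v F := by simp [huF, huv]
  have hvFE : insert v F ⊆ E := Finset.insert_subset hv hFE
  have huFE : insert u F ⊆ E := Finset.insert_subset hu hFE
  have huvFE : insert u (insert v F) ⊆ E := Finset.insert_subset hu hvFE
  have hcard : F.card ≤ s.card := Finset.card_le_card hFs
  set k := s.card - F.card with hk
  have e1 : (E \ F).card = k + 2 := by
    rw [Finset.card_sdiff_of_subset hFE]; omega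
  have e2 : (E \ insert v F).card = k + 1 := by
    rw [Finset.card_sdiff_of_subset hvFE, Finset.card_insert_of_notMem hvF]; omega
  have e3 : (E \ insert u F).card = k + 1 := by
    rw [Finset.card_sdiff_of_subset huFE, Finset.card_insert_of_notMem huF]; omega
  have e4 : (E \ insert u (insert v F)).card = k := by
    rw [Finset.card_sdiff_of_subset huvFE, Finset.card_insert_of_notMem huvF,
      Finset.card_insert_of_notMem hvF]; omega
  have e5 : (s \ F).card = k := by rw [Finset.card_sdiff_of_subset hFs]
  have pa := hp (cellOn b (insert u (insert v F)) i)
  have pb := hp (cellOn b F i)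
  have pc := hp (cellOn b (insert u F) i)
  have pd := hp (cellOn b (insert v F) i)
  rw [e1, e2, e3, e4, e5, Real.log_div (by positivity) (by positivity),
    Real.log_mul pa.ne' pb.ne', Real.log_mul pc.ne' pd.ne']
  ring
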